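/- Let 𝔤 be a Lie algebra, V₀ and V₁ vector spaces with Lie algebra representations μ₀: 𝔤 → End(V₀), μ₁: 𝔤 → End(V₁), and let ν: ∧²𝔤 → Hom(V₀,V₁) satisfy [μ(X₁), ν(X₂,X₃)] + c.p. = ν([X₁,X₂],X₃) + c.p. (where [μ(X), A] = μ₁(X)∘A − A∘μ₀(X)). Define ν̃: ∧³(𝔤 ⊕ V₀) → V₁ by ν̃(X₁+ξ₁, X₂+ξ₂, X₃+ξ₃) = ν(X₁,X₂)(ξ₃) + ν(X₂,X₃)(ξ₁) + ν(X₃,X₁)(ξ₂). Then ν is a Lie algebra 2-cocycle of 𝔤 with values in Hom(V₀,V₁) if and only if ν̃ is a Lie algebra 3-cocycle of the semidirect product Lie algebra 𝔤 ⋉ V₀ with values in V₁ (acting via μ̃(X+ξ) = μ₁(X)). -/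

import Mathlib

/-!
Each term of `ν̃` involves exactly one `V₀`-component, linearly, and the bracket of
`𝔤 ⋉ V₀` preserves this, so the coboundary of `ν̃` at `(X₁+ξ₁, …, X₄+ξ₄)` is linear in
`(ξ₁, …, ξ₄)`. The coefficient of each `ξᵢ` is, up to sign, the coboundary of `ν` at the
three remaining `Xⱼ`. Hence `dν = 0` gives `dν̃ = 0`, and conversely `dν(X₁,X₂,X₃) ξ` is
recovered as `dν̃(X₁, X₂, X₃, ξ)`.
-/

namespace SemidirectCocycle

variable {R 𝔤 V₀ V₁ : Type*} [CommRing R] [Bracket 𝔤 𝔤]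
  [AddCommGroup V₀] [Module R V₀] [AddCommGroup V₁] [Module R V₁]

def homCoboundary (μ₀ : 𝔤 → Module.End R V₀) (μ₁ : 𝔤 → Module.End R V₁)
    (ν : 𝔤 → 𝔤 → V₀ →ₗ[R] V₁) (X₁ X₂ X₃ : 𝔤) : V₀ →ₗ[R] V₁ :=
  ((μ₁ X₁) ∘ₗ (ν X₂ X₃) - (ν X₂ X₃) ∘ₗ (μ₀ X₁))
    - ((μ₁ X₂) ∘ₗ (ν X₁ X₃) - (ν X₁ X₃) ∘ₗ (μ₀ X₂))
    + ((μ₁ X₃) ∘ₗ (ν X₁ X₂) - (ν X₁ X₂) ∘ₗ (μ₀ X₃))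
    - ν ⁅X₁, X₂⁆ X₃ + ν ⁅X₁, X₃⁆ X₂ - ν ⁅X₂, X₃⁆ X₁

def coboundary₃ {L V : Type*} [AddCommGroup V] [Module R V] (ρ : L → Module.End R V)
    (br : L → L → L) (c : L → L → L → V) (a₁ a₂ a₃ a₄ : L) : V :=
  ρ a₁ (c a₂ a₃ a₄) - ρ a₂ (c a₁ a₃ a₄) + ρ a₃ (c a₁ a₂ a₄) - ρ a₄ (c a₁ a₂ a₃)
    - c (br a₁ a₂) a₃ a₄ + c (br a₁ a₃) a₂ a₄ - c (br a₁ a₄) a₂ a₃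
    - c (br a₂ a₃) a₁ a₄ + c (br a₂ a₄) a₁ a₃ - c (br a₃ a₄) a₁ a₂

def semidirectBracket (μ₀ : 𝔤 → Module.End R V₀) (x y : 𝔤 × V₀) : 𝔤 × V₀ :=
  (⁅x.1, y.1⁆, μ₀ x.1 y.2 - μ₀ y.1 x.2)

/-- The 3-cochain `ν̃` on `𝔤 ⋉ V₀`. -/
def extendCochain (ν : 𝔤 → 𝔤 → V₀ →ₗ[R] V₁) (x y z : 𝔤 × V₀) : V₁ :=
  ν x.1 y.1 z.2 + ν y.1 z.1 x.2 + ν z.1 x.1 y.2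

theorem coboundary₃_extendCochain (μ₀ : 𝔤 → Module.End R V₀) (μ₁ : 𝔤 → Module.End R V₁)
    (ν : 𝔤 → 𝔤 → V₀ →ₗ[R] V₁) (hν : ∀ X Y, ν X Y = -ν Y X) (X₁ X₂ X₃ X₄ : 𝔤)
    (ξ₁ ξ₂ ξ₃ ξ₄ : V₀) :
    coboundary₃ (fun a => μ₁ a.1) (semidirectBracket μ₀) (extendCochain ν)
        (X₁, ξ₁) (X₂, ξ₂) (X₃, ξ₃) (X₄, ξ₄) =
      -homCoboundary μ₀ μ₁ ν X₂ X₃ X₄ ξ₁ + homCoboundary μ₀ μ₁ ν X₁ X₃ X₄ ξ₂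
        - homCoboundary μ₀ μ₁ ν X₁ X₂ X₄ ξ₃ + homCoboundary μ₀ μ₁ ν X₁ X₂ X₃ ξ₄ := by
  have hν' : ∀ X Y v, ν X Y v = -ν Y X v := fun X Y v => by rw [hν X Y]; rfl
  simp only [coboundary₃, homCoboundary, semidirectBracket, extendCochain,
    LinearMap.sub_apply, LinearMap.add_apply, LinearMap.comp_apply, map_add, map_sub,
    hν' X₄ X₂, hν' X₄ X₁, hν' X₃ X₁, hν' X₄ ⁅X₁, X₂⁆, hν' X₄ ⁅X₁, X₃⁆, hν' X₃ ⁅X₁, X₄⁆,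
    hν' X₄ ⁅X₂, X₃⁆, hν' X₃ ⁅X₂, X₄⁆, hν' X₂ ⁅X₃, X₄⁆, map_neg]
  module

theorem homCoboundary_apply_eq_coboundary₃ [Zero 𝔤] (μ₀ : 𝔤 → Module.End R V₀)
    (μ₁ : 𝔤 → Module.End R V₁) (ν : 𝔤 → 𝔤 → V₀ →ₗ[R] V₁) (hν : ∀ X Y, ν X Y = -ν Y X)
    (X₁ X₂ X₃ : 𝔤) (ξ : V₀) :
    homCoboundary μ₀ μ₁ ν X₁ X₂ X₃ ξ =
      coboundary₃ (fun a => μ₁ a.1) (semidirectBracket μ₀) (extendCochain ν)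
        (X₁, 0) (X₂, 0) (X₃, 0) (0, ξ) := by
  simp [coboundary₃_extendCochain μ₀ μ₁ ν hν]

theorem homCoboundary_eq_zero_iff_coboundary₃_eq_zero [Zero 𝔤] (μ₀ : 𝔤 → Module.End R V₀)
    (μ₁ : 𝔤 → Module.End R V₁) (ν : 𝔤 → 𝔤 → V₀ →ₗ[R] V₁) (hν : ∀ X Y, ν X Y = -ν Y X) :
    (∀ X₁ X₂ X₃, homCoboundary μ₀ μ₁ ν X₁ X₂ X₃ = 0) ↔
      ∀ a₁ a₂ a₃ a₄, coboundary₃ (fun a => μ₁ a.1) (semidirectBracket μ₀) (extendCochain ν)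
        a₁ a₂ a₃ a₄ = 0 := by
  constructor
  · rintro h ⟨X₁, ξ₁⟩ ⟨X₂, ξ₂⟩ ⟨X₃, ξ₃⟩ ⟨X₄, ξ₄⟩
    simp [coboundary₃_extendCochain μ₀ μ₁ ν hν, h]
  · intro h X₁ X₂ X₃
    ext ξ
    rw [homCoboundary_apply_eq_coboundary₃ μ₀ μ₁ ν hν, h, LinearMap.zero_apply]

end SemidirectCocycle

open SemidirectCocycle in
theorem nu_two_cocycle_iff_nu_tilde_three_cocycle_general
    {𝔤 V₀ V₁ : Type} [LieRing 𝔤] [LieAlgebra ℝ 𝔤]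
    [AddCommGroup V₀] [Module ℝ V₀] [AddCommGroup V₁] [Module ℝ V₁]
    -- μ₀ and μ₁ are Lie algebra representations
    (μ₀ : 𝔤 →ₗ[ℝ] Module.End ℝ V₀) (μ₁ : 𝔤 →ₗ[ℝ] Module.End ℝ V₁)
    -- ν and the compatibility identity
    (ν : 𝔤 → 𝔤 → (V₀ →ₗ[ℝ] V₁))
    (hν_skew : ∀ X Y, ν X Y = - ν Y X)
    -- the semidirect product Lie algebra 𝔤 ⋉ V₀
    (br : 𝔤 × V₀ → 𝔤 × V₀ → 𝔤 × V₀)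
    (hbr : ∀ x y : 𝔤 × V₀, br x y = (⁅x.1, y.1⁆, μ₀ x.1 y.2 - μ₀ y.1 x.2))
    -- the 3-cochain ν̃ on 𝔤 ⋉ V₀ with values in V₁
    (ν' : 𝔤 × V₀ → 𝔤 × V₀ → 𝔤 × V₀ → V₁)
    (hν' : ∀ x y z : 𝔤 × V₀,
      ν' x y z = ν x.1 y.1 z.2 + ν y.1 z.1 x.2 + ν z.1 x.1 y.2) :
    -- ν is a 2-cocycle  ↔  ν̃ is a 3-cocycle
    (∀ X₁ X₂ X₃ : 𝔤,
      ((μ₁ X₁) ∘ₗ (ν X₂ X₃) - (ν X₂ X₃) ∘ₗ (μ₀ X₁))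
        - ((μ₁ X₂) ∘ₗ (ν X₁ X₃) - (ν X₁ X₃) ∘ₗ (μ₀ X₂))
        + ((μ₁ X₃) ∘ₗ (ν X₁ X₂) - (ν X₁ X₂) ∘ₗ (μ₀ X₃))
        - ν ⁅X₁, X₂⁆ X₃ + ν ⁅X₁, X₃⁆ X₂ - ν ⁅X₂, X₃⁆ X₁ = 0)
    ↔
    (∀ a₁ a₂ a₃ a₄ : 𝔤 × V₀,
      μ₁ a₁.1 (ν' a₂ a₃ a₄) - μ₁ a₂.1 (ν' a₁ a₃ a₄)
        + μ₁ a₃.1 (ν' a₁ a₂ a₄) - μ₁ a₄.1 (ν' a₁ a₂ a₃)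
        - ν' (br a₁ a₂) a₃ a₄ + ν' (br a₁ a₃) a₂ a₄ - ν' (br a₁ a₄) a₂ a₃
        - ν' (br a₂ a₃) a₁ a₄ + ν' (br a₂ a₄) a₁ a₃ - ν' (br a₃ a₄) a₁ a₂
        = 0) := by
  obtain rfl : br = semidirectBracket μ₀ := funext₂ hbr
  obtain rfl : ν' = extendCochain ν := funext fun x => funext₂ (hν' x)
  exact homCoboundary_eq_zero_iff_coboundary₃_eq_zero μ₀ μ₁ ν hν_skew

/-- `ν` is a Lie algebra 2-cocycle of `𝔤` with values in `Hom(V₀,V₁)` if and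
only if `ν̃(X₁+ξ₁,X₂+ξ₂,X₃+ξ₃) = ν(X₁,X₂)(ξ₃) + ν(X₂,X₃)(ξ₁) + ν(X₃,X₁)(ξ₂)`
is a Lie algebra 3-cocycle of the semidirect product `𝔤 ⋉ V₀` with values in
`V₁` (acting via `μ̃(X+ξ) = μ₁(X)`). -/
theorem nu_two_cocycle_iff_nu_tilde_three_cocycle
    {𝔤 V₀ V₁ : Type} [LieRing 𝔤] [LieAlgebra ℝ 𝔤]
    [AddCommGroup V₀] [Module ℝ V₀] [AddCommGroup V₁] [Module ℝ V₁]
    -- μ₀ and μ₁ are Lie algebra representations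
    (μ₀ : 𝔤 →ₗ[ℝ] Module.End ℝ V₀) (μ₁ : 𝔤 →ₗ[ℝ] Module.End ℝ V₁)
    (hμ₀ : ∀ X Y, μ₀ ⁅X, Y⁆ = μ₀ X * μ₀ Y - μ₀ Y * μ₀ X)
    (hμ₁ : ∀ X Y, μ₁ ⁅X, Y⁆ = μ₁ X * μ₁ Y - μ₁ Y * μ₁ X)
    -- ν and the compatibility identity
    (ν : 𝔤 → 𝔤 → (V₀ →ₗ[ℝ] V₁))
    (hν_skew : ∀ X Y, ν X Y = - ν Y X)
    (hcompat : ∀ X₁ X₂ X₃,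
      ((μ₁ X₁) ∘ₗ (ν X₂ X₃) - (ν X₂ X₃) ∘ₗ (μ₀ X₁))
      + ((μ₁ X₂) ∘ₗ (ν X₃ X₁) - (ν X₃ X₁) ∘ₗ (μ₀ X₂))
      + ((μ₁ X₃) ∘ₗ (ν X₁ X₂) - (ν X₁ X₂) ∘ₗ (μ₀ X₃))
      = ν ⁅X₁, X₂⁆ X₃ + ν ⁅X₂, X₃⁆ X₁ + ν ⁅X₃, X₁⁆ X₂)
    -- the semidirect product Lie algebra 𝔤 ⋉ V₀
    (br : 𝔤 × V₀ → 𝔤 × V₀ → 𝔤 × V₀)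
    (hbr : ∀ x y : 𝔤 × V₀, br x y = (⁅x.1, y.1⁆, μ₀ x.1 y.2 - μ₀ y.1 x.2))
    -- the 3-cochain ν̃ on 𝔤 ⋉ V₀ with values in V₁
    (ν' : 𝔤 × V₀ → 𝔤 × V₀ → 𝔤 × V₀ → V₁)
    (hν' : ∀ x y z : 𝔤 × V₀,
      ν' x y z = ν x.1 y.1 z.2 + ν y.1 z.1 x.2 + ν z.1 x.1 y.2) :
    -- ν is a 2-cocycle  ↔  ν̃ is a 3-cocycle
    (∀ X₁ X₂ X₃ : 𝔤,
      ((μ₁ X₁) ∘ₗ (ν X₂ X₃) - (ν X₂ X₃) ∘ₗ (μ₀ X₁))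
        - ((μ₁ X₂) ∘ₗ (ν X₁ X₃) - (ν X₁ X₃) ∘ₗ (μ₀ X₂))
        + ((μ₁ X₃) ∘ₗ (ν X₁ X₂) - (ν X₁ X₂) ∘ₗ (μ₀ X₃))
        - ν ⁅X₁, X₂⁆ X₃ + ν ⁅X₁, X₃⁆ X₂ - ν ⁅X₂, X₃⁆ X₁ = 0)
    ↔
    (∀ a₁ a₂ a₃ a₄ : 𝔤 × V₀,
      μ₁ a₁.1 (ν' a₂ a₃ a₄) - μ₁ a₂.1 (ν' a₁ a₃ a₄)
        + μ₁ a₃.1 (ν' a₁ a₂ a₄) - μ₁ a₄.1 (ν' a₁ a₂ a₃)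
        - ν' (br a₁ a₂) a₃ a₄ + ν' (br a₁ a₃) a₂ a₄ - ν' (br a₁ a₄) a₂ a₃
        - ν' (br a₂ a₃) a₁ a₄ + ν' (br a₂ a₄) a₁ a₃ - ν' (br a₃ a₄) a₁ a₂
        = 0) :=
  nu_two_cocycle_iff_nu_tilde_three_cocycle_general μ₀ μ₁ ν hν_skew br hbr ν' hν'
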